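/- Let g > 1 and a ≥ 0 be real numbers, and for integers k ≥ 1 define p_k = (B(k+a, 1+(g+a)/(g−1)) / B(1+a, 1+(g+a)/(g−1))) · (g+a)/(g−1+g(1+a)), where B is the Beta function. Then the sequence (p_k)_{k≥1} is a probability distribution: p_k ≥ 0 for all k and ∑_{k=1}^{∞} p_k = 1. -/

import Mathlib

/-- The Beta function `B(x,y) = Γ(x)Γ(y)/Γ(x+y)`. -/
noncomputable def Beta (x y : ℝ) : ℝ :=
  Real.Gamma x * Real.Gamma y / Real.Gamma (x + y)

/-- The closed-form facet degree distribution of GeneSCs: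
`p_k = (B(k+a, 1+(g+a)/(g−1)) / B(1+a, 1+(g+a)/(g−1))) · (g+a)/(g−1+g(1+a))`. -/
noncomputable def facetDegreeDist (g a : ℝ) (k : ℕ) : ℝ :=
  (Beta ((k : ℝ) + a) (1 + (g + a) / (g - 1)) /
    Beta (1 + a) (1 + (g + a) / (g - 1))) * ((g + a) / (g - 1 + g * (1 + a)))

/-! Put `d = (g + a) / (g - 1)`. From `Γ(s + 1) = s Γ(s)`, `B(x, 1 + d) = B(x, d) - B(x + 1, d)`,
so `∑_{k ≥ 1} B(k + a, 1 + d)` telescopes to `B(1 + a, d)`, the tail `B(n + a, d)` tending to `0`.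
The weight `(g + a) / (g - 1 + g (1 + a))` equals `d / (1 + a + d) = B(1 + a, 1 + d) / B(1 + a, d)`,
which normalises the sum to `1`. -/

open Filter Topology

theorem Antitone.hasSum_sub_succ {f : ℕ → ℝ} {l : ℝ} (hf : Antitone f)
    (hl : Tendsto f atTop (𝓝 l)) : HasSum (fun n ↦ f n - f (n + 1)) (f 0 - l) := by
  rw [hasSum_iff_tendsto_nat_of_nonneg fun n ↦ sub_nonneg.mpr (hf n.le_succ)]
  simpa only [Finset.sum_range_sub'] using tendsto_const_nhds.sub hl

lemma Beta_pos {x y : ℝ} (hx : 0 < x) (hy : 0 < y) : 0 < Beta x y :=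
  div_pos (mul_pos (Real.Gamma_pos_of_pos hx) (Real.Gamma_pos_of_pos hy))
    (Real.Gamma_pos_of_pos (add_pos hx hy))

lemma Beta_add_one_left {x y : ℝ} (hx : 0 < x) (hy : 0 < y) :
    Beta (x + 1) y = Beta x y * (x / (x + y)) := by
  have hxy : x + y ≠ 0 := (add_pos hx hy).ne'
  have hΓ : Real.Gamma (x + y) ≠ 0 := (Real.Gamma_pos_of_pos (add_pos hx hy)).ne'
  rw [Beta, Beta, Real.Gamma_add_one hx.ne', add_right_comm, Real.Gamma_add_one hxy]
  field_simp

lemma Beta_one_add_right {x y : ℝ} (hx : 0 < x) (hy : 0 < y) :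
    Beta x (1 + y) = Beta x y * (y / (x + y)) := by
  have hxy : x + y ≠ 0 := (add_pos hx hy).ne'
  have hΓ : Real.Gamma (x + y) ≠ 0 := (Real.Gamma_pos_of_pos (add_pos hx hy)).ne'
  rw [Beta, Beta, add_comm 1 y, Real.Gamma_add_one hy.ne', ← add_assoc, Real.Gamma_add_one hxy]
  field_simp

lemma Beta_one_add_right_eq_sub {x y : ℝ} (hx : 0 < x) (hy : 0 < y) :
    Beta x (1 + y) = Beta x y - Beta (x + 1) y := by
  rw [Beta_one_add_right hx hy, Beta_add_one_left hx hy]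
  field_simp [(add_pos hx hy).ne']
  ring

lemma Beta_add_nat_le {x y : ℝ} (hx : 0 < x) (hy : 1 ≤ y) (n : ℕ) :
    Beta (x + n) y ≤ Beta x y * (x / (x + n)) := by
  induction n with
  | zero => simp [hx.ne']
  | succ n ih =>
    have hxn : 0 < x + n := by positivity
    have hB := Beta_pos hx (by linarith : 0 < y)
    have hratio : (x + n) / (x + n + y) ≤ (x + n) / (x + ↑(n + 1)) := by
      rw [Nat.cast_succ, ← add_assoc]
      exact div_le_div_of_nonneg_left hxn.le (by linarith) (by linarith)
    calc Beta (x + ↑(n + 1)) y = Beta (x + n) y * ((x + n) / (x + n + y)) := by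
          rw [← Beta_add_one_left hxn (by linarith)]; push_cast; ring_nf
      _ ≤ Beta x y * (x / (x + n)) * ((x + n) / (x + ↑(n + 1))) :=
          mul_le_mul ih hratio (by positivity) (by positivity)
      _ = Beta x y * (x / (x + ↑(n + 1))) := by
          field_simp

lemma tendsto_Beta_add_nat_atTop {x y : ℝ} (hx : 0 < x) (hy : 1 ≤ y) :
    Tendsto (fun n : ℕ ↦ Beta (x + n) y) atTop (𝓝 0) := by
  have hbound : Tendsto (fun n : ℕ ↦ Beta x y * (x / (x + n))) atTop (𝓝 0) := by
    simpa using (tendsto_const_nhds.div_atTop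
      (tendsto_atTop_add_const_left _ x tendsto_natCast_atTop_atTop)).const_mul (Beta x y)
  exact squeeze_zero (fun n ↦ (Beta_pos (by positivity) (by linarith)).le)
    (Beta_add_nat_le hx hy) hbound

theorem hasSum_Beta_add_nat_one_add_right {x y : ℝ} (hx : 0 < x) (hy : 1 ≤ y) :
    HasSum (fun n : ℕ ↦ Beta (x + n) (1 + y)) (Beta x y) := by
  have hy0 : 0 < y := by linarith
  have hstep (n : ℕ) : Beta (x + n) (1 + y) = Beta (x + n) y - Beta (x + ↑(n + 1)) y := by
    rw [Beta_one_add_right_eq_sub (by positivity) hy0, Nat.cast_succ, add_assoc]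
  have hanti : Antitone fun n : ℕ ↦ Beta (x + n) y := antitone_nat_of_succ_le fun n ↦ by
    linarith [hstep n, Beta_pos (x := x + n) (by positivity) (by linarith : 0 < 1 + y)]
  simpa only [hstep, Nat.cast_zero, add_zero, sub_zero] using
    hanti.hasSum_sub_succ (tendsto_Beta_add_nat_atTop hx hy)

/-- For `g > 1`, `a ≥ 0`, the sequence `(p_k)_{k ≥ 1}` is a probability
distribution: `p_k ≥ 0` for all `k ≥ 1` and `∑_{k=1}^∞ p_k = 1`. -/
theorem facet_degree_dist_is_probability (g a : ℝ) (hg : 1 < g) (ha : 0 ≤ a) :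
    (∀ k : ℕ, 1 ≤ k → 0 ≤ facetDegreeDist g a k) ∧
      ∑' k : ℕ, facetDegreeDist g a (k + 1) = 1 := by
  set d := (g + a) / (g - 1) with hd
  have hg1 : 0 < g - 1 := by linarith
  have hd1 : 1 ≤ d := by rw [hd, le_div_iff₀ hg1]; linarith
  have hd0 : 0 < d := by linarith
  have ha1 : 0 < 1 + a := by linarith
  have hweight : (g + a) / (g - 1 + g * (1 + a)) = d / (1 + a + d) := by
    rw [hd]; field_simp; ring
  have hp (k : ℕ) : facetDegreeDist g a k =
      Beta (k + a) (1 + d) / Beta (1 + a) (1 + d) * (d / (1 + a + d)) := by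
    rw [facetDegreeDist, hweight]
  constructor
  · intro k hk
    have hk' : (1 : ℝ) ≤ k := by exact_mod_cast hk
    have hBk := Beta_pos (by linarith : 0 < (k : ℝ) + a) (by linarith : 0 < 1 + d)
    have hB1 := Beta_pos ha1 (by linarith : 0 < 1 + d)
    rw [hp]
    positivity
  · have hsum := ((hasSum_Beta_add_nat_one_add_right ha1 hd1).div_const
      (Beta (1 + a) (1 + d))).mul_right (d / (1 + a + d))
    have hshift (k : ℕ) : ((k + 1 : ℕ) : ℝ) + a = 1 + a + k := by push_cast; ring
    simp only [hp, hshift]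
    have hBd := Beta_pos ha1 hd0
    rw [hsum.tsum_eq, Beta_one_add_right ha1 hd0]
    field_simp
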